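/- arXiv:2407.12398 — 7 statements merged into one kernel-verified Lean document; each statement's English description precedes it below -/
import Mathlib

section
/- Let $b\in(1/2,1)$ be real. Then $\lim_{q\to 0^+} q^{2-2b}\,K_b(q) = \Gamma(2-2b)$, where $\Gamma$ is the Gamma function. -/
open Filter MeasureTheory Set Real

/-- `K b q = ∑_{l=1}^∞ e^{-lq} l^{1-2b}`. -/
noncomputable def K (b q : ℝ) : ℝ :=
  ∑' l : ℕ, Real.exp (-((l : ℝ) + 1) * q) * ((l : ℝ) + 1) ^ (1 - 2 * b)

/-!
With `f x = exp (-x) * x ^ (1 - 2b)`, the quantity `q ^ (2 - 2b) * K b q = ∑_{n ≥ 1} q f (n q)` is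
a right-endpoint Riemann sum of `Γ(2 - 2b) = ∫_0^∞ f`. Since `f` is decreasing and integrable on
`(0, ∞)`, the integral test traps this sum between `∫_q^∞ f` and `∫_0^∞ f`, and
`∫_q^∞ f → ∫_0^∞ f` as `q → 0⁺`.
-/

namespace AntitoneOn

variable {f : ℝ → ℝ}

lemma integral_Ioi_one_le_tsum_add_one (hf : AntitoneOn f (Ioi 0))
    (hint : IntegrableOn f (Ioi 0)) (hnonneg : ∀ x ∈ Ioi 0, 0 ≤ f x) :
    ∫ x in Ioi 1, f x ≤ ∑' n : ℕ, f (n + 1) := by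
  have hanti : AntitoneOn f (Ici ((1 : ℕ) : ℝ)) := hf.mono (by simp [Ici_subset_Ioi])
  have hint₁ : IntegrableOn f (Ioi ((1 : ℕ) : ℝ)) := hint.mono_set (by simp)
  have hnonneg₁ : ∀ x ∈ Ioi ((1 : ℕ) : ℝ), 0 ≤ f x := fun x hx =>
    hnonneg x (lt_trans one_pos (by simpa using hx))
  simpa using hanti.integral_le_tsum_comp_add 1
    (hanti.summable_of_integrableOn_Ioi hint₁ hnonneg₁) hnonneg₁

lemma tsum_add_one_le_integral_Ioi_zero (hf : AntitoneOn f (Ioi 0))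
    (hint : IntegrableOn f (Ioi 0)) (hnonneg : ∀ x ∈ Ioi 0, 0 ≤ f x) :
    ∑' n : ℕ, f (n + 1) ≤ ∫ x in Ioi 0, f x := by
  have hanti : AntitoneOn f (Ici ((1 : ℕ) : ℝ)) := hf.mono (by simp [Ici_subset_Ioi])
  have hint₁ : IntegrableOn f (Ioi ((1 : ℕ) : ℝ)) := hint.mono_set (by simp)
  have hnonneg₁ : ∀ x ∈ Ioi ((1 : ℕ) : ℝ), 0 ≤ f x := fun x hx =>
    hnonneg x (lt_trans one_pos (by simpa using hx))
  have hsum : Summable fun n : ℕ => f (n + 1) := by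
    simpa using (summable_nat_add_iff 1).2 (hanti.summable_of_integrableOn_Ioi hint₁ hnonneg₁)
  -- `f` may be unbounded near `0`, so the library's integral test only applies from `1` on.
  have hfirst : f 1 ≤ ∫ x in (0)..1, f x := by
    rw [intervalIntegral.integral_of_le zero_le_one]
    calc f 1 = ∫ _ in Ioc 0 1, f 1 := by simp
      _ ≤ ∫ x in Ioc 0 1, f x :=
        setIntegral_mono_on (integrableOn_const measure_Ioc_lt_top.ne)
          (hint.mono_set Ioc_subset_Ioi_self) measurableSet_Ioc
          fun x hx => hf hx.1 (mem_Ioi.2 zero_lt_one) hx.2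
  have htail : ∑' n : ℕ, f (n + 2) ≤ ∫ x in Ioi 1, f x := by
    convert hanti.tsum_comp_add_le_integral 1 hint₁ hnonneg₁ using 4 <;> push_cast <;> ring
  calc ∑' n : ℕ, f (n + 1) = f 1 + ∑' n : ℕ, f (n + 2) := by
        rw [hsum.tsum_eq_zero_add]; push_cast; ring_nf
    _ ≤ (∫ x in (0)..1, f x) + ∫ x in Ioi 1, f x := add_le_add hfirst htail
    _ = ∫ x in Ioi 0, f x :=
      intervalIntegral.integral_interval_add_Ioi hint (by simpa using hint₁)

lemma tsum_mul_comp_mul_mem_Icc (hf : AntitoneOn f (Ioi 0))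
    (hint : IntegrableOn f (Ioi 0)) (hnonneg : ∀ x ∈ Ioi 0, 0 ≤ f x) {q : ℝ} (hq : 0 < q) :
    ∑' n : ℕ, q * f (q * (n + 1)) ∈ Icc (∫ x in Ioi q, f x) (∫ x in Ioi 0, f x) := by
  have hg : AntitoneOn (fun t => q * f (q * t)) (Ioi 0) := fun x hx y hy hxy =>
    mul_le_mul_of_nonneg_left
      (hf (mul_pos hq hx) (mul_pos hq hy) (mul_le_mul_of_nonneg_left hxy hq.le)) hq.le
  have hg_int : IntegrableOn (fun t => q * f (q * t)) (Ioi 0) :=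
    ((integrableOn_Ioi_comp_mul_left_iff f 0 hq).2 (by simpa using hint)).const_mul q
  have hg_nonneg : ∀ t ∈ Ioi 0, 0 ≤ q * f (q * t) := fun t ht =>
    mul_nonneg hq.le (hnonneg _ (mul_pos hq ht))
  have hg_integral (c : ℝ) : ∫ t in Ioi c, q * f (q * t) = ∫ x in Ioi (q * c), f x := by
    rw [integral_const_mul, ← smul_eq_mul, integral_comp_mul_left_Ioi' f c hq]
  constructor
  · simpa [hg_integral] using hg.integral_Ioi_one_le_tsum_add_one hg_int hg_nonneg
  · simpa [hg_integral] using hg.tsum_add_one_le_integral_Ioi_zero hg_int hg_nonneg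

open Topology in
theorem tendsto_tsum_mul_comp_mul (hf : AntitoneOn f (Ioi 0)) (hint : IntegrableOn f (Ioi 0))
    (hnonneg : ∀ x ∈ Ioi 0, 0 ≤ f x) :
    Tendsto (fun q => ∑' n : ℕ, q * f (q * (n + 1))) (𝓝[>] 0) (𝓝 (∫ x in Ioi 0, f x)) := by
  have htail : Tendsto (fun q => ∫ x in Ioi q, f x) (𝓝[>] 0) (𝓝 (∫ x in Ioi 0, f x)) :=
    hint.continuousWithinAt_Ici_primitive_Ioi.mono_left (nhdsWithin_mono _ Ioi_subset_Ici_self)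
  refine tendsto_of_tendsto_of_tendsto_of_le_of_le' htail tendsto_const_nhds ?_ ?_ <;>
    filter_upwards [self_mem_nhdsWithin] with q hq
  exacts [(hf.tsum_mul_comp_mul_mem_Icc hint hnonneg hq).1,
    (hf.tsum_mul_comp_mul_mem_Icc hint hnonneg hq).2]

end AntitoneOn

lemma antitoneOn_exp_neg_mul_rpow {s : ℝ} (hs : s ≤ 1) :
    AntitoneOn (fun x => exp (-x) * x ^ (s - 1)) (Ioi 0) := fun x hx y _ hxy =>
  mul_le_mul (exp_le_exp.2 (neg_le_neg hxy)) (rpow_le_rpow_of_nonpos hx hxy (by linarith))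
    (rpow_nonneg (le_of_lt (lt_of_lt_of_le hx hxy)) _) (exp_pos _).le

lemma rpow_mul_K {q : ℝ} (hq : 0 < q) (b : ℝ) :
    q ^ (2 - 2 * b) * K b q =
      ∑' n : ℕ, q * (exp (-(q * (n + 1))) * (q * (n + 1)) ^ (2 - 2 * b - 1)) := by
  rw [K, ← tsum_mul_left]
  congr 1 with n
  rw [mul_rpow hq.le (by positivity), show 2 - 2 * b = 1 + (2 - 2 * b - 1) by ring,
    rpow_add hq, rpow_one]
  ring_nf

theorem limit_rpow_mul_K (b : ℝ) (hb : b ∈ Ioo (1/2 : ℝ) 1) :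
    Tendsto (fun q : ℝ => q ^ (2 - 2 * b) * K b q) (nhdsWithin 0 (Ioi 0))
      (nhds (Real.Gamma (2 - 2 * b))) := by
  obtain ⟨hb₁, hb₂⟩ := hb
  have hs : 0 < 2 - 2 * b := by linarith
  have hnonneg : ∀ x ∈ Ioi (0 : ℝ), 0 ≤ exp (-x) * x ^ (2 - 2 * b - 1) := fun x hx =>
    mul_nonneg (exp_pos _).le (rpow_nonneg (le_of_lt hx) _)
  rw [Gamma_eq_integral hs]
  refine ((antitoneOn_exp_neg_mul_rpow (by linarith)).tendsto_tsum_mul_comp_mul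
    (GammaIntegral_convergent hs) hnonneg).congr' ?_
  filter_upwards [self_mem_nhdsWithin] with q hq
  exact (rpow_mul_K hq b).symm
end

section
/- Let $s\in(1/2,1)$ and let $b:(0,\infty)\to(1/2,1)$ and $q:(0,\infty)\to(0,\infty)$ be functions with $\lim_{\alpha\to\infty} b(\alpha) = s$ and $\lim_{\alpha\to\infty} q(\alpha) = 0$. Then $\lim_{\alpha\to\infty}\, q(\alpha)^{2-2b(\alpha)}\, K_{b(\alpha)}(q(\alpha)) = \Gamma(2-2s)$, where $\Gamma$ is the Gamma function. -/
open Filter MeasureTheory Set Real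

/-!
With `c = 1 - 2b ∈ (-1, 0)`, `K b q` is the sum of the decreasing function
`f t = e^{-tq} t^c` over the positive integers, so the integral test traps it between
`∫_1^∞ f` and `∫_0^∞ f = Γ(c+1) / q^{c+1}`. The missing piece `∫_0^1 f ≤ 1/(c+1)` costs at most
`q^{c+1}/(c+1)` after multiplying by `q^{c+1}`, which vanishes as `q → 0`; continuity of `Γ`
at `2 - 2s > 0` finishes the squeeze.
-/

theorem setIntegral_Ioc_add_setIntegral_Ioi {E : Type*} [NormedAddCommGroup E] [NormedSpace ℝ E]
    {f : ℝ → E} {a b : ℝ} (hab : a ≤ b) (integrable : IntegrableOn f (Ioi a)) :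
    (∫ x in Ioc a b, f x) + ∫ x in Ioi b, f x = ∫ x in Ioi a, f x := by
  rw [← setIntegral_union (Ioc_disjoint_Ioi le_rfl) measurableSet_Ioi
    (integrable.mono_set Ioc_subset_Ioi_self) (integrable.mono_set (Ioi_subset_Ioi hab)),
    Ioc_union_Ioi_eq_Ioi hab]

section IntegralTest

variable {f : ℝ → ℝ} (anti : AntitoneOn f (Ioi 0)) (integrable : IntegrableOn f (Ioi 0))
  (nonneg : ∀ t ∈ Ioi 0, 0 ≤ f t)

include anti integrable nonneg

theorem AntitoneOn.summable_comp_add_one : Summable fun n : ℕ ↦ f (n + 1) := by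
  have anti₁ : AntitoneOn f (Ici ((1 : ℕ) : ℝ)) :=
    anti.mono fun x (hx : _ ≤ x) ↦ lt_of_lt_of_le one_pos (by exact_mod_cast hx)
  have := anti₁.summable_of_integrableOn_Ioi (integrable.mono_set (Ioi_subset_Ioi (by simp)))
    fun t (ht : _ < t) ↦ nonneg t (lt_trans (by norm_num) ht)
  simpa using (summable_nat_add_iff 1).2 this

theorem AntitoneOn.tsum_add_one_le_integral_of_Ioi :
    ∑' n : ℕ, f (n + 1) ≤ ∫ x in Ioi 0, f x := by
  have head : f 1 ≤ ∫ x in Ioc 0 1, f x := by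
    have := setIntegral_mono_on (integrableOn_const (by simp))
      (integrable.mono_set Ioc_subset_Ioi_self) measurableSet_Ioc
      fun x hx ↦ anti hx.1 (by norm_num : (1 : ℝ) ∈ Ioi 0) hx.2
    simpa using this
  have tail : ∑' n : ℕ, f (n + 2) ≤ ∫ x in Ioi 1, f x := by
    have := (anti.mono (Ici_subset_Ioi.2 (by norm_num))).tsum_comp_add_le_integral 1
      (integrable.mono_set (Ioi_subset_Ioi (by simp)))
      fun t (ht : _ < t) ↦ nonneg t (lt_trans (by norm_num) ht)
    simpa [add_assoc, one_add_one_eq_two] using this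
  calc ∑' n : ℕ, f (n + 1) = f 1 + ∑' n : ℕ, f (n + 2) := by
        simpa [add_assoc, one_add_one_eq_two] using
          (anti.summable_comp_add_one integrable nonneg).tsum_eq_zero_add
    _ ≤ (∫ x in Ioc 0 1, f x) + ∫ x in Ioi 1, f x := add_le_add head tail
    _ = ∫ x in Ioi 0, f x := setIntegral_Ioc_add_setIntegral_Ioi zero_le_one integrable

theorem AntitoneOn.integral_Ioi_one_le_tsum_add_one_s8 :
    ∫ x in Ioi 1, f x ≤ ∑' n : ℕ, f (n + 1) := by
  have := (anti.mono (Ici_subset_Ioi.2 (by norm_num))).integral_le_tsum_comp_add 1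
    ((summable_nat_add_iff 1).1 (by simpa using anti.summable_comp_add_one integrable nonneg))
    fun t (ht : _ < t) ↦ nonneg t (lt_trans (by norm_num) ht)
  simpa using this

end IntegralTest

noncomputable def expNegMulRpow (c q t : ℝ) : ℝ := exp (-t * q) * t ^ c

section ExpNegMulRpow

variable {c q : ℝ}

theorem expNegMulRpow_nonneg {t : ℝ} (ht : 0 ≤ t) : 0 ≤ expNegMulRpow c q t :=
  mul_nonneg (exp_nonneg _) (rpow_nonneg ht _)

theorem antitoneOn_expNegMulRpow (hc : c ≤ 0) (hq : 0 ≤ q) :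
    AntitoneOn (expNegMulRpow c q) (Ioi 0) := fun x hx y _ hxy ↦
  mul_le_mul (exp_le_exp.2 (by nlinarith)) (rpow_le_rpow_of_nonpos hx hxy hc)
    (rpow_nonneg (le_of_lt (lt_of_lt_of_le hx hxy)) _) (exp_nonneg _)

theorem integrableOn_expNegMulRpow (hc : -1 < c) (hq : 0 < q) :
    IntegrableOn (expNegMulRpow c q) (Ioi 0) := by
  refine (integrableOn_rpow_mul_exp_neg_mul_rpow hc one_pos hq).congr_fun (fun t _ ↦ ?_)
    measurableSet_Ioi
  simp only [expNegMulRpow, rpow_one]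
  ring_nf

theorem integral_expNegMulRpow (hc : -1 < c) (hq : 0 < q) :
    ∫ t in Ioi 0, expNegMulRpow c q t = Gamma (c + 1) / q ^ (c + 1) := by
  have := integral_rpow_mul_exp_neg_mul_Ioi (by linarith : 0 < c + 1) hq
  rw [add_sub_cancel_right, one_div, inv_rpow hq.le, ← div_eq_inv_mul] at this
  rw [← this]
  refine setIntegral_congr_fun measurableSet_Ioi fun t _ ↦ ?_
  simp only [expNegMulRpow]
  ring_nf

theorem setIntegral_Ioc_zero_one_expNegMulRpow_le (hc : -1 < c) (hq : 0 < q) :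
    ∫ t in Ioc 0 1, expNegMulRpow c q t ≤ 1 / (c + 1) := by
  have hrpow : IntegrableOn (fun t : ℝ ↦ t ^ c) (Ioc 0 1) := by
    rw [← intervalIntegrable_iff_integrableOn_Ioc_of_le zero_le_one]
    exact intervalIntegral.intervalIntegrable_rpow' hc
  calc ∫ t in Ioc 0 1, expNegMulRpow c q t ≤ ∫ t in Ioc 0 1, t ^ c := by
        refine setIntegral_mono_on ((integrableOn_expNegMulRpow hc hq).mono_set
          Ioc_subset_Ioi_self) hrpow measurableSet_Ioc fun t ht ↦ ?_
        exact mul_le_of_le_one_left (rpow_nonneg ht.1.le _)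
          (exp_le_one_iff.2 (by nlinarith [ht.1]))
    _ = 1 / (c + 1) := by
        rw [← intervalIntegral.integral_of_le zero_le_one, integral_rpow (Or.inl hc),
          one_rpow, zero_rpow (by linarith)]
        ring

end ExpNegMulRpow

theorem K_eq_tsum_expNegMulRpow (b q : ℝ) :
    K b q = ∑' n : ℕ, expNegMulRpow (1 - 2 * b) q (n + 1) := rfl

section KBounds

variable {b q : ℝ} (hb : 1 / 2 ≤ b) (hb' : b < 1) (hq : 0 < q)
include hb hb' hq

theorem rpow_mul_K_le_Gamma : q ^ (2 - 2 * b) * K b q ≤ Gamma (2 - 2 * b) := by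
  have hc : -1 < 1 - 2 * b := by linarith
  have upper := (antitoneOn_expNegMulRpow (by linarith) hq.le).tsum_add_one_le_integral_of_Ioi
    (integrableOn_expNegMulRpow hc hq) fun t ht ↦ expNegMulRpow_nonneg (le_of_lt ht)
  rw [← K_eq_tsum_expNegMulRpow, integral_expNegMulRpow hc hq,
    show 1 - 2 * b + 1 = 2 - 2 * b by ring] at upper
  calc q ^ (2 - 2 * b) * K b q ≤ q ^ (2 - 2 * b) * (Gamma (2 - 2 * b) / q ^ (2 - 2 * b)) :=
        mul_le_mul_of_nonneg_left upper (by positivity)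
    _ = Gamma (2 - 2 * b) := mul_div_cancel₀ _ (by positivity)

theorem Gamma_sub_le_rpow_mul_K :
    Gamma (2 - 2 * b) - q ^ (2 - 2 * b) / (2 - 2 * b) ≤ q ^ (2 - 2 * b) * K b q := by
  have hc : -1 < 1 - 2 * b := by linarith
  have integrable := integrableOn_expNegMulRpow hc hq
  have lower := (antitoneOn_expNegMulRpow (by linarith) hq.le).integral_Ioi_one_le_tsum_add_one_s8
    integrable fun t ht ↦ expNegMulRpow_nonneg (le_of_lt ht)
  have split := setIntegral_Ioc_add_setIntegral_Ioi zero_le_one integrable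
  have head := setIntegral_Ioc_zero_one_expNegMulRpow_le hc hq
  rw [← K_eq_tsum_expNegMulRpow] at lower
  rw [integral_expNegMulRpow hc hq] at split
  rw [show 1 - 2 * b + 1 = 2 - 2 * b by ring] at split head
  have hqa : 0 < q ^ (2 - 2 * b) := by positivity
  calc Gamma (2 - 2 * b) - q ^ (2 - 2 * b) / (2 - 2 * b)
      = q ^ (2 - 2 * b) * (Gamma (2 - 2 * b) / q ^ (2 - 2 * b) - 1 / (2 - 2 * b)) := by
        field_simp
    _ ≤ q ^ (2 - 2 * b) * K b q := mul_le_mul_of_nonneg_left (by linarith) hqa.le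

end KBounds

theorem limit_q_rpow_mul_K_of_limits (s : ℝ) (hs : s ∈ Ioo (1/2 : ℝ) 1)
    (b q : ℝ → ℝ)
    (hb : ∀ α : ℝ, 0 < α → b α ∈ Ioo (1/2 : ℝ) 1)
    (hq : ∀ α : ℝ, 0 < α → q α ∈ Ioi (0 : ℝ))
    (hbs : Tendsto b atTop (nhds s))
    (hq0 : Tendsto q atTop (nhds 0)) :
    Tendsto (fun α : ℝ => q α ^ (2 - 2 * b α) * K (b α) (q α)) atTop
      (nhds (Real.Gamma (2 - 2 * s))) := by
  have hs' : 0 < 2 - 2 * s := by linarith [hs.2]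
  have hexp : Tendsto (fun α ↦ 2 - 2 * b α) atTop (nhds (2 - 2 * s)) :=
    tendsto_const_nhds.sub (hbs.const_mul 2)
  have hGamma : Tendsto (fun α ↦ Gamma (2 - 2 * b α)) atTop (nhds (Gamma (2 - 2 * s))) :=
    (differentiableAt_Gamma fun m ↦ (neg_nonpos.2 m.cast_nonneg).trans_lt hs' |>.ne').continuousAt
      |>.tendsto.comp hexp
  have hrpow : Tendsto (fun α ↦ q α ^ (2 - 2 * b α)) atTop (nhds 0) := by
    simpa [zero_rpow hs'.ne'] using hq0.rpow hexp (Or.inr hs')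
  have hlower : Tendsto (fun α ↦ Gamma (2 - 2 * b α) - q α ^ (2 - 2 * b α) / (2 - 2 * b α))
      atTop (nhds (Gamma (2 - 2 * s))) := by
    simpa using hGamma.sub (hrpow.div hexp hs'.ne')
  refine tendsto_of_tendsto_of_tendsto_of_le_of_le' hlower hGamma ?_ ?_ <;>
    filter_upwards [eventually_gt_atTop 0] with α hα
  · exact Gamma_sub_le_rpow_mul_K (hb α hα).1.le (hb α hα).2 (hq α hα)
  · exact rpow_mul_K_le_Gamma (hb α hα).1.le (hb α hα).2 (hq α hα)
end

section
/- Let $s\in(1/2,1)$ and let $b:(0,\infty)\to(1/2,1)$ and $q:(0,\infty)\to(0,\infty)$ be functions with $\lim_{\alpha\to\infty} b(\alpha) = s$ and $\lim_{\alpha\to\infty} q(\alpha) = 0$. Then there exist constants $Z\ge 1$ and $Q>0$ such that for all $\alpha\in(Q,\infty)$: $\frac{1}{Z} \le \frac{K_{b(\alpha)}(q(\alpha))}{q(\alpha)^{-2+2b(\alpha)}} \le Z$. -/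
open Filter MeasureTheory Set Real

noncomputable def KTerm (b q : ℝ) (l : ℕ) : ℝ :=
  exp (-((l : ℝ) + 1) * q) * ((l : ℝ) + 1) ^ (1 - 2 * b)

lemma K_eq_tsum (b q : ℝ) : K b q = ∑' l, KTerm b q l := rfl

lemma KTerm_nonneg (b q : ℝ) (l : ℕ) : 0 ≤ KTerm b q l := by
  unfold KTerm; positivity

lemma rpow_sub_one_mul_le_sub_rpow {p x : ℝ} (hp0 : 0 ≤ p) (hp1 : p ≤ 1) (hx : 1 ≤ x) :
    p * x ^ (p - 1) ≤ x ^ p - (x - 1) ^ p := by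
  have hx0 : 0 < x := by linarith
  have hbern := rpow_one_add_le_one_add_mul_self (s := -x⁻¹)
    (by linarith [inv_le_one_of_one_le₀ hx]) hp0 hp1
  have hsplit : x - 1 = x * (1 + -x⁻¹) := by field_simp; ring
  rw [hsplit, mul_rpow hx0.le (by linarith [inv_le_one_of_one_le₀ hx]), rpow_sub_one hx0.ne']
  have := mul_le_mul_of_nonneg_left hbern (rpow_nonneg hx0.le p)
  linarith [show x ^ p * (1 + p * -x⁻¹) = x ^ p - p * (x ^ p / x) by field_simp; ring]

lemma sum_range_rpow_sub_one_le {p : ℝ} (hp0 : 0 < p) (hp1 : p ≤ 1) (N : ℕ) :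
    ∑ l ∈ Finset.range N, ((l : ℝ) + 1) ^ (p - 1) ≤ (N : ℝ) ^ p / p := by
  rw [le_div_iff₀ hp0, Finset.sum_mul]
  calc ∑ l ∈ Finset.range N, ((l : ℝ) + 1) ^ (p - 1) * p
      ≤ ∑ l ∈ Finset.range N, (((l + 1 : ℕ) : ℝ) ^ p - (l : ℝ) ^ p) := by
        refine Finset.sum_le_sum fun l _ => ?_
        have := rpow_sub_one_mul_le_sub_rpow hp0.le hp1 (x := (l : ℝ) + 1) (by simp)
        rw [add_sub_cancel_right] at this
        push_cast
        linarith
    _ = (N : ℝ) ^ p := by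
        rw [Finset.sum_range_sub (fun l : ℕ => (l : ℝ) ^ p)]
        simp [zero_rpow hp0.ne']

section KTerm

variable {b q : ℝ}

lemma KTerm_add_le (hb : 1 / 2 ≤ b) (hq : 0 ≤ q) (N l : ℕ) :
    KTerm b q (l + N) ≤ ((N : ℝ) + 1) ^ (1 - 2 * b) * exp (-q) ^ l := by
  unfold KTerm
  rw [mul_comm, ← exp_nat_mul]
  push_cast
  gcongr ?_ * exp ?_
  · exact rpow_le_rpow_of_nonpos (by positivity) (by linarith [(l.cast_nonneg : (0 : ℝ) ≤ l)])
      (by linarith)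
  · nlinarith [(N.cast_nonneg : (0 : ℝ) ≤ N)]

lemma summable_geometric_exp_neg (hq : 0 < q) : Summable fun l : ℕ => exp (-q) ^ l :=
  summable_geometric_of_lt_one (exp_nonneg _) (exp_lt_one_iff.2 (by linarith))

lemma summable_KTerm (hb : 1 / 2 ≤ b) (hq : 0 < q) : Summable (KTerm b q) :=
  (summable_geometric_exp_neg hq).of_nonneg_of_le (KTerm_nonneg b q)
    fun l => by simpa using KTerm_add_le hb hq.le 0 l

lemma inv_one_sub_exp_neg_le (hq : 0 < q) : (1 - exp (-q))⁻¹ ≤ 1 + q⁻¹ := by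
  have hexp : exp (-q) * exp q = 1 := by rw [← exp_add]; simp
  have hlt : exp (-q) < 1 := exp_lt_one_iff.2 (by linarith)
  rw [inv_le_iff_one_le_mul₀ (by linarith), ← mul_le_mul_iff_right₀ hq]
  field_simp
  nlinarith [add_one_le_exp q, exp_pos (-q)]

lemma tsum_KTerm_add_le (hb : 1 / 2 ≤ b) (hq : 0 < q) (N : ℕ) :
    ∑' l, KTerm b q (l + N) ≤ ((N : ℝ) + 1) ^ (1 - 2 * b) * (1 - exp (-q))⁻¹ := by
  rw [← tsum_geometric_of_lt_one (exp_nonneg _) (exp_lt_one_iff.2 (by linarith)), ← tsum_mul_left]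
  exact ((summable_nat_add_iff N).2 (summable_KTerm hb hq)).tsum_le_tsum (KTerm_add_le hb hq.le N)
    ((summable_geometric_exp_neg hq).mul_left _)

lemma sum_range_KTerm_le (hb : 1 / 2 ≤ b) (hb1 : b < 1) (hq : 0 ≤ q) (N : ℕ) :
    ∑ l ∈ Finset.range N, KTerm b q l ≤ (N : ℝ) ^ (2 - 2 * b) / (2 - 2 * b) := by
  calc ∑ l ∈ Finset.range N, KTerm b q l
      ≤ ∑ l ∈ Finset.range N, ((l : ℝ) + 1) ^ ((2 - 2 * b) - 1) := by
        refine Finset.sum_le_sum fun l _ => ?_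
        rw [show (2 - 2 * b) - 1 = 1 - 2 * b by ring]
        refine mul_le_of_le_one_left (by positivity) (exp_le_one_iff.2 ?_)
        nlinarith [(l.cast_nonneg : (0 : ℝ) ≤ l)]
    _ ≤ (N : ℝ) ^ (2 - 2 * b) / (2 - 2 * b) :=
        sum_range_rpow_sub_one_le (by linarith) (by linarith) N

lemma le_sum_range_KTerm (hb : 1 / 2 ≤ b) (hq : 0 ≤ q) {N : ℕ} (hNq : N * q ≤ 1) :
    N * (exp (-1) * (N : ℝ) ^ (1 - 2 * b)) ≤ ∑ l ∈ Finset.range N, KTerm b q l := by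
  have hterm : ∀ l ∈ Finset.range N, exp (-1) * (N : ℝ) ^ (1 - 2 * b) ≤ KTerm b q l := by
    intro l hl
    have hlN : (l : ℝ) + 1 ≤ N := by exact_mod_cast Finset.mem_range.1 hl
    unfold KTerm
    gcongr exp ?_ * ?_
    · nlinarith
    · exact rpow_le_rpow_of_nonpos (by positivity) hlN (by linarith)
  simpa using Finset.card_nsmul_le_sum _ _ _ hterm

lemma exp_neg_one_div_two_mul_rpow_le_K (hb : 1 / 2 ≤ b) (hb1 : b ≤ 1) (hq : 0 < q)
    (hq1 : q ≤ 1) : exp (-1) / 2 * q ^ (-2 + 2 * b) ≤ K b q := by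
  set N := ⌊q⁻¹⌋₊
  have hN : (1 : ℝ) ≤ N := by exact_mod_cast (Nat.one_le_floor_iff _).2 (one_le_inv₀ hq |>.2 hq1)
  have hNq : N * q ≤ 1 := by
    have := Nat.floor_le (inv_nonneg.2 hq.le)
    rwa [← le_div_iff₀ hq, one_div]
  have hinv : q⁻¹ ≤ 2 * N := by linarith [Nat.lt_floor_add_one q⁻¹]
  have htwo : (2 : ℝ) ^ (2 - 2 * b) ≤ 2 := by
    simpa using rpow_le_rpow_of_exponent_le one_le_two (show 2 - 2 * b ≤ 1 by linarith)
  calc exp (-1) / 2 * q ^ (-2 + 2 * b)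
      = exp (-1) / 2 * q⁻¹ ^ (2 - 2 * b) := by rw [← rpow_neg_eq_inv_rpow]; ring_nf
    _ ≤ exp (-1) / 2 * (2 * N) ^ (2 - 2 * b) := by gcongr; linarith
    _ ≤ exp (-1) / 2 * (2 * N ^ (2 - 2 * b)) := by
        rw [mul_rpow zero_le_two (by positivity)]; gcongr
    _ = N * (exp (-1) * (N : ℝ) ^ (1 - 2 * b)) := by
        rw [show 2 - 2 * b = (1 - 2 * b) + 1 by ring, rpow_add_one (by positivity)]; ring
    _ ≤ ∑ l ∈ Finset.range N, KTerm b q l := le_sum_range_KTerm hb hq.le hNq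
    _ ≤ K b q := (summable_KTerm hb hq).sum_le_tsum _ fun l _ => KTerm_nonneg b q l

lemma K_le_mul_rpow (hb : 1 / 2 ≤ b) (hb1 : b < 1) (hq : 0 < q) (hq1 : q ≤ 1) :
    K b q ≤ (1 / (2 - 2 * b) + 2) * q ^ (-2 + 2 * b) := by
  set N := ⌊q⁻¹⌋₊
  have hNle : (N : ℝ) ≤ q⁻¹ := Nat.floor_le (inv_nonneg.2 hq.le)
  have hinv : q⁻¹ ≤ N + 1 := (Nat.lt_floor_add_one q⁻¹).le
  have hq1' : 1 ≤ q⁻¹ := one_le_inv₀ hq |>.2 hq1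
  have hhead : ∑ l ∈ Finset.range N, KTerm b q l ≤ q⁻¹ ^ (2 - 2 * b) / (2 - 2 * b) :=
    (sum_range_KTerm_le hb hb1 hq.le N).trans (by gcongr <;> linarith)
  have htail : ∑' l, KTerm b q (l + N) ≤ 2 * q⁻¹ ^ (2 - 2 * b) :=
    calc ∑' l, KTerm b q (l + N)
        ≤ ((N : ℝ) + 1) ^ (1 - 2 * b) * (1 - exp (-q))⁻¹ := tsum_KTerm_add_le hb hq N
      _ ≤ q⁻¹ ^ (1 - 2 * b) * (q⁻¹ + q⁻¹) := by
        refine mul_le_mul (rpow_le_rpow_of_nonpos (by positivity) hinv (by linarith)) ?_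
          (inv_nonneg.2 (sub_nonneg.2 (exp_le_one_iff.2 (by linarith)))) (by positivity)
        linarith [inv_one_sub_exp_neg_le hq]
      _ = 2 * q⁻¹ ^ (2 - 2 * b) := by
        rw [show 2 - 2 * b = (1 - 2 * b) + 1 by ring, rpow_add_one (by positivity)]; ring
  rw [K_eq_tsum, ← (summable_KTerm hb hq).sum_add_tsum_nat_add N,
    show -2 + 2 * b = -(2 - 2 * b) by ring, rpow_neg_eq_inv_rpow, add_mul, one_div_mul_eq_div]
  exact add_le_add hhead htail

end KTerm

theorem K_comparable_to_q_rpow (s : ℝ) (hs : s ∈ Ioo (1/2 : ℝ) 1)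
    (b q : ℝ → ℝ)
    (hb : ∀ α : ℝ, 0 < α → b α ∈ Ioo (1/2 : ℝ) 1)
    (hq : ∀ α : ℝ, 0 < α → q α ∈ Ioi (0 : ℝ))
    (hbs : Tendsto b atTop (nhds s))
    (hq0 : Tendsto q atTop (nhds 0)) :
    ∃ Z : ℝ, 1 ≤ Z ∧ ∃ Q : ℝ, 0 < Q ∧ ∀ α ∈ Ioi Q,
      1 / Z ≤ K (b α) (q α) / q α ^ (-2 + 2 * b α) ∧
      K (b α) (q α) / q α ^ (-2 + 2 * b α) ≤ Z := by
  obtain ⟨-, hs1⟩ := hs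
  obtain ⟨A, hA⟩ := eventually_atTop.1
    ((hbs.eventually (eventually_le_nhds (show s < (s + 1) / 2 by linarith))).and
      (hq0.eventually (eventually_le_nhds zero_lt_one)))
  have hs0 : 0 < 1 - s := by linarith
  have he : 1 ≤ exp 1 := one_le_exp zero_le_one
  set Z := 1 / (1 - s) + 2 * exp 1
  have hZ : 2 * exp 1 ≤ Z := le_add_of_nonneg_left (by positivity)
  refine ⟨Z, by linarith, max A 1, by positivity, fun α hα => ?_⟩
  have hα0 : 0 < α := lt_of_lt_of_le one_pos ((le_max_right A 1).trans hα.le)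
  obtain ⟨hbα, hbα1⟩ := hb α hα0
  have hqα : 0 < q α := hq α hα0
  obtain ⟨hbα_le, hqα1⟩ := hA α ((le_max_left A 1).trans hα.le)
  have hE : 0 < q α ^ (-2 + 2 * b α) := rpow_pos_of_pos hqα _
  constructor
  · rw [le_div_iff₀ hE]
    refine le_trans ?_ (exp_neg_one_div_two_mul_rpow_le_K hbα.le hbα1.le hqα hqα1)
    gcongr ?_ * _
    calc 1 / Z ≤ 1 / (2 * exp 1) := one_div_le_one_div_of_le (by positivity) hZ
      _ = exp (-1) / 2 := by rw [exp_neg]; ring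
  · rw [div_le_iff₀ hE]
    refine (K_le_mul_rpow hbα.le hbα1 hqα hqα1).trans (mul_le_mul_of_nonneg_right ?_ hE.le)
    linarith [one_div_le_one_div_of_le hs0 (show 1 - s ≤ 2 - 2 * b α by linarith)]
end

section
/- Let $s\in(1/2,1)$ and let $b:(0,\infty)\to(1/2,1)$ and $q:(0,\infty)\to(0,\infty)$ be functions with $\lim_{\alpha\to\infty} b(\alpha) = s$ and $\lim_{\alpha\to\infty} q(\alpha) = 0$. Suppose moreover that there exist constants $C\ge 1$ and $Y>0$ such that for all $\alpha\in(Y,\infty)$: $\frac1C \le \frac{K_{b(\alpha)}(q(\alpha))}{\alpha} \le C$. Then there exist constants $Z\ge 1$ and $Q>0$ such that for all $\alpha\in(Q,\infty)$: $\frac{1}{Z} \le \frac{q(\alpha)}{\alpha^{1/(-2+2b(\alpha))}} \le Z$. -/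
set_option maxHeartbeats 1000000

open Filter MeasureTheory Set Real

lemma summable_Kterm {b q : ℝ} (hq : 0 < q) (hb : 1 - 2 * b ≤ 0) :
    Summable (fun l : ℕ => Real.exp (-((l : ℝ) + 1) * q) * ((l : ℝ) + 1) ^ (1 - 2 * b)) := by
  refine Summable.of_nonneg_of_le (fun l => by positivity) (fun l => ?_)
    (summable_geometric_of_lt_one (Real.exp_pos (-q)).le (Real.exp_lt_one_iff.mpr (by linarith)))
  have h1 : ((l : ℝ) + 1) ^ (1 - 2 * b) ≤ 1 :=
    Real.rpow_le_one_of_one_le_of_nonpos (by have := Nat.cast_nonneg (α := ℝ) l; linarith) hb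
  have h2 : Real.exp (-((l : ℝ) + 1) * q) ≤ Real.exp (-q) ^ l := by
    rw [← Real.exp_nat_mul]
    apply Real.exp_le_exp.mpr
    have : (0:ℝ) ≤ l := Nat.cast_nonneg l
    nlinarith
  calc Real.exp (-((l : ℝ) + 1) * q) * ((l : ℝ) + 1) ^ (1 - 2 * b)
      ≤ Real.exp (-((l : ℝ) + 1) * q) * 1 :=
        mul_le_mul_of_nonneg_left h1 (Real.exp_pos _).le
    _ = Real.exp (-((l : ℝ) + 1) * q) := mul_one _
    _ ≤ Real.exp (-q) ^ l := h2

lemma K_lower {b q : ℝ} (hb1 : 1/2 < b) (hb2 : b < 1) (hq : 0 < q) (hq1 : q ≤ 1) :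
    Real.exp (-1) / 2 * q ^ (2 * b - 2) ≤ K b q := by
  have hb : 1 - 2 * b ≤ 0 := by linarith
  set N := ⌊1/q⌋₊ with hNdef
  have hx : (1:ℝ) ≤ 1/q := one_le_one_div hq hq1
  have hN1 : 1 ≤ N := Nat.le_floor (by exact_mod_cast hx)
  have hN1' : (1:ℝ) ≤ (N:ℝ) := by exact_mod_cast hN1
  have hNpos : (0:ℝ) < N := by linarith
  have hNle : (N:ℝ) ≤ 1/q := Nat.floor_le (by positivity)
  have h2N : 1/q ≤ 2 * N := by
    have := Nat.lt_floor_add_one (1/q)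
    push_cast at this
    linarith
  -- each term in range N is ≥ exp(-1) * N^(1-2b)
  have hterm : ∀ l ∈ Finset.range N,
      Real.exp (-1) * (N:ℝ) ^ (1 - 2 * b)
        ≤ Real.exp (-((l : ℝ) + 1) * q) * ((l : ℝ) + 1) ^ (1 - 2 * b) := by
    intro l hl
    have hl' : (l:ℝ) + 1 ≤ N := by
      have := Finset.mem_range.mp hl
      exact_mod_cast Nat.succ_le_of_lt this
    have hlp : (0:ℝ) < (l:ℝ) + 1 := by positivity
    have h1 : Real.exp (-1) ≤ Real.exp (-((l : ℝ) + 1) * q) := by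
      apply Real.exp_le_exp.mpr
      have : ((l:ℝ) + 1) * q ≤ (N:ℝ) * q := by nlinarith
      have h2 : (N:ℝ) * q ≤ 1 := by
        calc (N:ℝ) * q ≤ (1/q) * q := by nlinarith
          _ = 1 := by field_simp
      nlinarith
    have h2 : (N:ℝ) ^ (1 - 2 * b) ≤ ((l:ℝ) + 1) ^ (1 - 2 * b) :=
      Real.rpow_le_rpow_of_nonpos hlp hl' hb
    have := Real.rpow_nonneg hNpos.le (1 - 2*b)
    nlinarith [Real.exp_pos (-(((l:ℝ)+1) * q)), Real.exp_pos (-1:ℝ),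
      Real.rpow_nonneg hlp.le (1 - 2*b)]
  have hsum : (N : ℝ) * (Real.exp (-1) * (N:ℝ) ^ (1 - 2 * b))
      ≤ ∑ l ∈ Finset.range N, Real.exp (-((l : ℝ) + 1) * q) * ((l : ℝ) + 1) ^ (1 - 2 * b) := by
    have := Finset.card_nsmul_le_sum (Finset.range N)
      (fun l => Real.exp (-((l : ℝ) + 1) * q) * ((l : ℝ) + 1) ^ (1 - 2 * b))
      (Real.exp (-1) * (N:ℝ) ^ (1 - 2 * b)) hterm
    simpa [Finset.card_range, nsmul_eq_mul] using this
  have hKs : ∑ l ∈ Finset.range N, Real.exp (-((l : ℝ) + 1) * q) * ((l : ℝ) + 1) ^ (1 - 2 * b)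
      ≤ K b q :=
    Summable.sum_le_tsum _ (fun l _ => by positivity) (summable_Kterm hq hb)
  -- N * N^(1-2b) = N^(2-2b)
  have hNN : (N:ℝ) * (N:ℝ) ^ (1 - 2 * b) = (N:ℝ) ^ (2 - 2 * b) := by
    have h : (2 - 2*b) = 1 + (1-2*b) := by ring
    rw [h, Real.rpow_add hNpos, Real.rpow_one]
  have hstep : (1/(2*q)) ^ (2 - 2*b) ≤ (N:ℝ) ^ (2 - 2*b) := by
    apply Real.rpow_le_rpow (by positivity) _ (by linarith)
    rw [div_le_iff₀ (by positivity)]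
    calc (1:ℝ) = (1/q) * q := by field_simp
      _ ≤ (2*N) * q := by nlinarith
      _ = (N:ℝ) * (2*q) := by ring
  have hfin : Real.exp (-1) / 2 * q ^ (2*b - 2) ≤ Real.exp (-1) * (1/(2*q)) ^ (2 - 2*b) := by
    have : (1/(2*q)) ^ (2 - 2*b) = (2*q) ^ (2*b - 2) := by
      rw [one_div, Real.inv_rpow (by positivity),
        show (2*b-2 : ℝ) = -(2-2*b) by ring, Real.rpow_neg (by positivity)]
    rw [this, Real.mul_rpow (by norm_num) hq.le]
    have h2 : (1:ℝ)/2 ≤ (2:ℝ) ^ (2*b - 2) := by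
      have : (2:ℝ) ^ (-1:ℝ) ≤ (2:ℝ) ^ (2*b - 2) :=
        Real.rpow_le_rpow_of_exponent_le (by norm_num) (by linarith)
      rwa [Real.rpow_neg_one, ← one_div] at this
    have hqp := Real.rpow_nonneg hq.le (2*b - 2)
    nlinarith [mul_nonneg (sub_nonneg.mpr h2) hqp, Real.exp_pos (-1:ℝ)]
  calc Real.exp (-1) / 2 * q ^ (2*b - 2)
      ≤ Real.exp (-1) * (1/(2*q)) ^ (2 - 2*b) := hfin
    _ ≤ Real.exp (-1) * (N:ℝ) ^ (2 - 2*b) := by nlinarith [mul_nonneg (sub_nonneg.mpr hstep) (Real.exp_pos (-1:ℝ)).le]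
    _ = (N:ℝ) * (Real.exp (-1) * (N:ℝ) ^ (1 - 2 * b)) := by rw [← hNN]; ring
    _ ≤ K b q := le_trans hsum hKs

lemma K_upper {b q : ℝ} (hb1 : 1/2 < b) (hb2 : b < 1) (hq : 0 < q) (hq1 : q ≤ 1) :
    K b q ≤ (1/(2 - 2*b) + 4) * q ^ (2 * b - 2) := by
  have hb : 1 - 2 * b ≤ 0 := by linarith
  have hp1 : (0:ℝ) < 2 - 2*b := by linarith
  set N := ⌊1/q⌋₊ with hNdef
  have hx : (1:ℝ) ≤ 1/q := one_le_one_div hq hq1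
  have hN1 : 1 ≤ N := Nat.le_floor (by exact_mod_cast hx)
  have hN1' : (1:ℝ) ≤ (N:ℝ) := by exact_mod_cast hN1
  have hNpos : (0:ℝ) < N := by linarith
  have hNle : (N:ℝ) ≤ 1/q := Nat.floor_le (by positivity)
  have h2N : 1/q ≤ 2 * N := by
    have := Nat.lt_floor_add_one (1/q)
    push_cast at this
    linarith
  have hsumm := summable_Kterm hq hb
  -- Bernoulli-type inequality
  have hkey : ∀ n : ℕ, (2 - 2*b) * ((n:ℝ)+1) ^ (1-2*b)
      ≤ ((n:ℝ)+1) ^ (2-2*b) - (n:ℝ) ^ (2-2*b) := by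
    intro n
    set a : ℝ := (n:ℝ) + 1 with hadef
    have ha : 1 ≤ a := by rw [hadef]; have := Nat.cast_nonneg (α := ℝ) n; linarith
    have hap : 0 < a := by linarith
    have hn : (n:ℝ) = a * (1 + (-1/a)) := by field_simp; linarith
    have hsplit : (n:ℝ) ^ (2-2*b) = a ^ (2-2*b) * (1 + (-1/a)) ^ (2-2*b) := by
      have h0 : 1/a ≤ 1 := (div_le_one hap).mpr ha
      rw [hn, Real.mul_rpow hap.le (by rw [neg_div]; linarith)]
    have hbern : (1 + (-1/a)) ^ (2-2*b) ≤ 1 + (2-2*b) * (-1/a) :=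
      rpow_one_add_le_one_add_mul_self
        (by rw [neg_div]; have h0 : 1/a ≤ 1 := (div_le_one hap).mpr ha; linarith)
        (by linarith) (by linarith)
    have hdiv : a ^ (2-2*b) / a = a ^ (1-2*b) := by
      rw [show (1-2*b:ℝ) = (2-2*b) + (-1) by ring, Real.rpow_add hap, Real.rpow_neg_one,
        div_eq_mul_inv]
    have hanon : 0 ≤ a ^ (2-2*b) := Real.rpow_nonneg hap.le _
    have : (n:ℝ) ^ (2-2*b) ≤ a ^ (2-2*b) - (2-2*b) * (a ^ (2-2*b) / a) := by
      rw [hsplit]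
      have := mul_le_mul_of_nonneg_left hbern hanon
      calc a ^ (2-2*b) * (1 + (-1/a)) ^ (2-2*b)
          ≤ a ^ (2-2*b) * (1 + (2-2*b) * (-1/a)) := this
        _ = a ^ (2-2*b) - (2-2*b) * (a ^ (2-2*b) / a) := by ring
    rw [hdiv] at this
    linarith
  -- head bound
  have hhead : ∑ l ∈ Finset.range N, Real.exp (-((l : ℝ) + 1) * q) * ((l : ℝ) + 1) ^ (1 - 2 * b)
      ≤ (N:ℝ) ^ (2-2*b) / (2-2*b) := by
    have h1 : ∀ l ∈ Finset.range N,
        Real.exp (-((l : ℝ) + 1) * q) * ((l : ℝ) + 1) ^ (1 - 2 * b)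
          ≤ (((l:ℝ)+1) ^ (2-2*b) - (l:ℝ) ^ (2-2*b)) / (2-2*b) := by
      intro l _
      have he : Real.exp (-((l : ℝ) + 1) * q) ≤ 1 := by
        apply Real.exp_le_one_iff.mpr
        have : (0:ℝ) ≤ l := Nat.cast_nonneg l
        nlinarith
      have hrn : (0:ℝ) ≤ ((l:ℝ)+1) ^ (1-2*b) := Real.rpow_nonneg (by positivity) _
      have := hkey l
      calc Real.exp (-((l : ℝ) + 1) * q) * ((l : ℝ) + 1) ^ (1 - 2 * b)
          ≤ 1 * ((l : ℝ) + 1) ^ (1 - 2 * b) := mul_le_mul_of_nonneg_right he hrn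
        _ = ((l : ℝ) + 1) ^ (1 - 2 * b) := one_mul _
        _ ≤ (((l:ℝ)+1) ^ (2-2*b) - (l:ℝ) ^ (2-2*b)) / (2-2*b) := by
            rw [le_div_iff₀ hp1]; linarith
    calc ∑ l ∈ Finset.range N, Real.exp (-((l : ℝ) + 1) * q) * ((l : ℝ) + 1) ^ (1 - 2 * b)
        ≤ ∑ l ∈ Finset.range N, (((l:ℝ)+1) ^ (2-2*b) - (l:ℝ) ^ (2-2*b)) / (2-2*b) :=
          Finset.sum_le_sum h1
      _ = (∑ l ∈ Finset.range N, (((l:ℝ)+1) ^ (2-2*b) - (l:ℝ) ^ (2-2*b))) / (2-2*b) := by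
          rw [Finset.sum_div]
      _ = (N:ℝ) ^ (2-2*b) / (2-2*b) := by
          congr 1
          have := Finset.sum_range_sub (f := fun n : ℕ => (n:ℝ) ^ (2-2*b)) N
          push_cast at this
          rw [this, Real.zero_rpow (by linarith), sub_zero]
  -- tail bound
  have htail : ∑' l : ℕ, Real.exp (-(((l + N : ℕ) : ℝ) + 1) * q) * (((l + N : ℕ):ℝ) + 1) ^ (1 - 2 * b)
      ≤ (N:ℝ) ^ (1-2*b) * (1 - Real.exp (-q))⁻¹ := by
    have hsum2 : Summable (fun l : ℕ => (N:ℝ) ^ (1-2*b) * Real.exp (-q) ^ l) :=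
      (summable_geometric_of_lt_one (Real.exp_pos _).le
        (Real.exp_lt_one_iff.mpr (by linarith))).mul_left _
    have hle : ∀ l : ℕ, Real.exp (-(((l + N : ℕ) : ℝ) + 1) * q) * (((l + N : ℕ):ℝ) + 1) ^ (1 - 2 * b)
        ≤ (N:ℝ) ^ (1-2*b) * Real.exp (-q) ^ l := by
      intro l
      push_cast
      have h1 : ((l:ℝ) + N + 1) ^ (1-2*b) ≤ (N:ℝ) ^ (1-2*b) := by
        apply Real.rpow_le_rpow_of_nonpos hNpos _ hb
        have : (0:ℝ) ≤ l := Nat.cast_nonneg l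
        linarith
      have h2 : Real.exp (-((l:ℝ) + N + 1) * q) ≤ Real.exp (-q) ^ l := by
        rw [← Real.exp_nat_mul]
        apply Real.exp_le_exp.mpr
        have h3 : (0:ℝ) ≤ l := Nat.cast_nonneg l
        nlinarith
      have h4 : (0:ℝ) ≤ ((l:ℝ) + N + 1) ^ (1-2*b) := Real.rpow_nonneg (by positivity) _
      calc Real.exp (-((l:ℝ) + N + 1) * q) * ((l:ℝ) + N + 1) ^ (1-2*b)
          ≤ Real.exp (-q) ^ l * ((l:ℝ) + N + 1) ^ (1-2*b) :=
            mul_le_mul_of_nonneg_right h2 h4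
        _ ≤ Real.exp (-q) ^ l * (N:ℝ) ^ (1-2*b) :=
            mul_le_mul_of_nonneg_left h1 (by positivity)
        _ = (N:ℝ) ^ (1-2*b) * Real.exp (-q) ^ l := by ring
    calc ∑' l : ℕ, Real.exp (-(((l + N : ℕ) : ℝ) + 1) * q) * (((l + N : ℕ):ℝ) + 1) ^ (1 - 2 * b)
        ≤ ∑' l : ℕ, (N:ℝ) ^ (1-2*b) * Real.exp (-q) ^ l :=
          Summable.tsum_le_tsum hle ((summable_nat_add_iff N).mpr hsumm) hsum2
      _ = (N:ℝ) ^ (1-2*b) * (1 - Real.exp (-q))⁻¹ := by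
          rw [tsum_mul_left, tsum_geometric_of_lt_one (Real.exp_pos _).le
            (Real.exp_lt_one_iff.mpr (by linarith))]
  -- combine
  have hsplit := Summable.sum_add_tsum_nat_add N hsumm
  have hKeq : K b q = (∑ l ∈ Finset.range N, Real.exp (-((l : ℝ) + 1) * q) * ((l : ℝ) + 1) ^ (1 - 2 * b))
      + ∑' l : ℕ, Real.exp (-(((l + N : ℕ) : ℝ) + 1) * q) * (((l + N : ℕ):ℝ) + 1) ^ (1 - 2 * b) := by
    rw [K, ← hsplit]
  -- head ≤ q^(2b-2)/(2-2b)
  have hq2 : (N:ℝ) ^ (2-2*b) ≤ q ^ (2*b-2) := by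
    have h1 : (N:ℝ) ^ (2-2*b) ≤ (1/q) ^ (2-2*b) :=
      Real.rpow_le_rpow hNpos.le hNle (by linarith)
    have h2 : (1/q) ^ (2-2*b) = q ^ (2*b-2) := by
      rw [one_div, Real.inv_rpow hq.le, show (2*b-2:ℝ) = -(2-2*b) by ring,
        Real.rpow_neg hq.le]
    linarith
  -- tail ≤ 4 q^(2b-2)
  have hexpq : (1 - Real.exp (-q))⁻¹ ≤ 2/q := by
    have h1 : Real.exp (-q) ≤ 1/(1+q) := by
      rw [Real.exp_neg, one_div]
      exact inv_anti₀ (by linarith) (by linarith [Real.add_one_le_exp q])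
    have h2 : q/2 ≤ 1 - Real.exp (-q) := by
      have : 1/(1+q) ≤ 1 - q/2 := by
        rw [div_le_iff₀ (by linarith)]
        nlinarith
      linarith
    rw [inv_le_iff_one_le_mul₀ (by linarith)]
    calc (1:ℝ) = (2/q) * (q/2) := by field_simp
      _ ≤ (2/q) * (1 - Real.exp (-q)) := by
          apply mul_le_mul_of_nonneg_left h2 (by positivity)
  have htail2 : (N:ℝ) ^ (1-2*b) * (1 - Real.exp (-q))⁻¹ ≤ 4 * q ^ (2*b-2) := by
    have h1 : (N:ℝ) ^ (1-2*b) ≤ (1/(2*q)) ^ (1-2*b) := by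
      apply Real.rpow_le_rpow_of_nonpos (by positivity) _ hb
      rw [div_le_iff₀ (by positivity)]
      calc (1:ℝ) = (1/q) * q := by field_simp
        _ ≤ (2*N) * q := by nlinarith
        _ = (N:ℝ) * (2*q) := by ring
    have h2 : (1/(2*q)) ^ (1-2*b) = (2*q) ^ (2*b-1) := by
      rw [one_div, Real.inv_rpow (by positivity), show (2*b-1:ℝ) = -(1-2*b) by ring,
        Real.rpow_neg (by positivity)]
    have h3 : (2*q) ^ (2*b-1) = 2 ^ (2*b-1) * q ^ (2*b-1) := Real.mul_rpow (by norm_num) hq.le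
    have h4 : (2:ℝ) ^ (2*b-1) ≤ 2 := by
      calc (2:ℝ) ^ (2*b-1) ≤ (2:ℝ) ^ (1:ℝ) :=
        Real.rpow_le_rpow_of_exponent_le (by norm_num) (by linarith)
        _ = 2 := Real.rpow_one 2
    have h5 : q ^ (2*b-1) / q = q ^ (2*b-2) := by
      rw [show (2*b-2:ℝ) = (2*b-1) + (-1) by ring, Real.rpow_add hq, Real.rpow_neg_one,
        div_eq_mul_inv]
    have hqn1 : (0:ℝ) ≤ q ^ (2*b-1) := Real.rpow_nonneg hq.le _
    have hNn : (0:ℝ) ≤ (N:ℝ) ^ (1-2*b) := Real.rpow_nonneg hNpos.le _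
    have hinvn : (0:ℝ) ≤ (1 - Real.exp (-q))⁻¹ := by
      apply inv_nonneg.mpr
      have := Real.exp_lt_one_iff.mpr (show -q < 0 by linarith)
      linarith
    calc (N:ℝ) ^ (1-2*b) * (1 - Real.exp (-q))⁻¹
        ≤ (2 ^ (2*b-1) * q ^ (2*b-1)) * (2/q) := by
          apply mul_le_mul (by rw [← h3, ← h2]; exact h1) hexpq hinvn
          positivity
      _ ≤ (2 * q ^ (2*b-1)) * (2/q) := by
          apply mul_le_mul_of_nonneg_right _ (by positivity)
          exact mul_le_mul_of_nonneg_right h4 hqn1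
      _ = 4 * (q ^ (2*b-1) / q) := by ring
      _ = 4 * q ^ (2*b-2) := by rw [h5]
  rw [hKeq]
  have := le_trans htail htail2
  calc (∑ l ∈ Finset.range N, Real.exp (-((l : ℝ) + 1) * q) * ((l : ℝ) + 1) ^ (1 - 2 * b))
      + ∑' l : ℕ, Real.exp (-(((l + N : ℕ) : ℝ) + 1) * q) * (((l + N : ℕ):ℝ) + 1) ^ (1 - 2 * b)
      ≤ (N:ℝ) ^ (2-2*b) / (2-2*b) + 4 * q ^ (2*b-2) := by linarith
    _ ≤ q ^ (2*b-2) / (2-2*b) + 4 * q ^ (2*b-2) := by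
        have : (N:ℝ) ^ (2-2*b) / (2-2*b) ≤ q ^ (2*b-2) / (2-2*b) :=
          div_le_div_of_nonneg_right hq2 hp1.le |>.trans_eq rfl
        linarith
    _ = (1/(2 - 2*b) + 4) * q ^ (2 * b - 2) := by ring

theorem q_comparable_to_alpha_rpow (s : ℝ) (hs : s ∈ Ioo (1/2 : ℝ) 1)
    (b q : ℝ → ℝ)
    (hb : ∀ α : ℝ, 0 < α → b α ∈ Ioo (1/2 : ℝ) 1)
    (hq : ∀ α : ℝ, 0 < α → q α ∈ Ioi (0 : ℝ))
    (hbs : Tendsto b atTop (nhds s))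
    (hq0 : Tendsto q atTop (nhds 0))
    (hcomp : ∃ C : ℝ, 1 ≤ C ∧ ∃ Y : ℝ, 0 < Y ∧ ∀ α ∈ Ioi Y,
      1 / C ≤ K (b α) (q α) / α ∧ K (b α) (q α) / α ≤ C) :
    ∃ Z : ℝ, 1 ≤ Z ∧ ∃ Q : ℝ, 0 < Q ∧ ∀ α ∈ Ioi Q,
      1 / Z ≤ q α / α ^ (1 / (-2 + 2 * b α)) ∧
      q α / α ^ (1 / (-2 + 2 * b α)) ≤ Z := by
  obtain ⟨hs1, hs2⟩ := hs
  obtain ⟨C, hC, Y, hY, hcomp⟩ := hcomp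
  set ε₀ : ℝ := 1 - s with hε₀def
  have hε₀ : 0 < ε₀ := by simp [hε₀def]; linarith
  set c₁ : ℝ := Real.exp (-1) / 2 with hc₁def
  have hc₁pos : 0 < c₁ := by positivity
  have hc₁le : c₁ ≤ 1 := by
    have := Real.exp_lt_one_iff.mpr (show (-1:ℝ) < 0 by norm_num)
    rw [hc₁def]; linarith
  set c₂ : ℝ := 1/(1-s) + 4 with hc₂def
  have hc₂4 : 4 ≤ c₂ := by
    have : 0 < 1/(1-s) := by positivity
    rw [hc₂def]; linarith
  set A : ℝ := C * c₂ with hAdef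
  set B : ℝ := C / c₁ with hBdef
  have hA1 : 1 ≤ A := by
    rw [hAdef]; nlinarith
  have hB1 : 1 ≤ B := by
    rw [hBdef, le_div_iff₀ hc₁pos]; linarith
  set Z : ℝ := max (A ^ (1/ε₀)) (B ^ (1/ε₀)) with hZdef
  have hApow1 : 1 ≤ A ^ (1/ε₀) := by
    calc (1:ℝ) = A ^ (0:ℝ) := (Real.rpow_zero A).symm
      _ ≤ A ^ (1/ε₀) := Real.rpow_le_rpow_of_exponent_le hA1 (by positivity)
  have hBpow1 : 1 ≤ B ^ (1/ε₀) := by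
    calc (1:ℝ) = B ^ (0:ℝ) := (Real.rpow_zero B).symm
      _ ≤ B ^ (1/ε₀) := Real.rpow_le_rpow_of_exponent_le hB1 (by positivity)
  have hZ1 : 1 ≤ Z := le_trans hApow1 (le_max_left _ _)
  refine ⟨Z, hZ1, ?_⟩
  -- eventual thresholds
  have hqev : ∀ᶠ α in atTop, q α < 1 := hq0.eventually_lt_const one_pos
  have hbev : ∀ᶠ α in atTop, b α < (1+s)/2 := hbs.eventually_lt_const (by linarith)
  obtain ⟨Y₁, hY₁⟩ := Filter.eventually_atTop.mp (hqev.and hbev)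
  refine ⟨max Y (max Y₁ 1), lt_of_lt_of_le hY (le_max_left _ _), ?_⟩
  intro α hα
  rw [mem_Ioi] at hα
  have hαY : α ∈ Ioi Y := mem_Ioi.mpr (lt_of_le_of_lt (le_max_left _ _) hα)
  have hαY₁ : Y₁ ≤ α := le_of_lt (lt_of_le_of_lt ((le_max_left _ _).trans (le_max_right _ _)) hα)
  have hαpos : 0 < α := lt_of_lt_of_le (by norm_num) (le_of_lt (lt_of_le_of_lt ((le_max_right _ _).trans (le_max_right _ _)) hα))
  obtain ⟨hq1', hb1'⟩ := hY₁ α hαY₁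
  obtain ⟨hbl, hbu⟩ := hb α hαpos
  have hqα : 0 < q α := hq α hαpos
  have hqα1 : q α ≤ 1 := le_of_lt hq1'
  obtain ⟨hK1, hK2⟩ := hcomp α hαY
  set p : ℝ := 2 * b α - 2 with hpdef
  have hpneg : p < 0 := by rw [hpdef]; linarith
  have hpε : p ≤ -ε₀ := by rw [hpdef, hε₀def]; linarith
  have hpne : p ≠ 0 := ne_of_lt hpneg
  -- K bounds
  have hKlow : c₁ * q α ^ p ≤ K (b α) (q α) := K_lower hbl hbu hqα hqα1
  have hKup : K (b α) (q α) ≤ c₂ * q α ^ p := by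
    have h1 := K_upper hbl hbu hqα hqα1
    have h2 : 1/(2 - 2 * b α) + 4 ≤ c₂ := by
      have h3 : 1 - s ≤ 2 - 2 * b α := by linarith
      have h4 : 1/(2 - 2 * b α) ≤ 1/(1-s) := by
        apply one_div_le_one_div_of_le (by linarith) h3
      rw [hc₂def]; linarith
    have hqp : 0 ≤ q α ^ p := Real.rpow_nonneg hqα.le _
    calc K (b α) (q α) ≤ (1/(2 - 2 * b α) + 4) * q α ^ p := h1
      _ ≤ c₂ * q α ^ p := mul_le_mul_of_nonneg_right h2 hqp
  -- K comparable to α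
  have hKα1 : α / C ≤ K (b α) (q α) := by
    have := (le_div_iff₀ hαpos).mp hK1
    calc α / C = 1/C * α := by ring
      _ ≤ K (b α) (q α) := this
  have hKα2 : K (b α) (q α) ≤ C * α := by
    have := (div_le_iff₀ hαpos).mp hK2
    linarith
  -- q^p bounds
  have hqplow : α / A ≤ q α ^ p := by
    have h1 : α / C ≤ c₂ * q α ^ p := le_trans hKα1 hKup
    rw [hAdef, div_le_iff₀ (by positivity : (0:ℝ) < C * c₂)]
    rw [div_le_iff₀ (by linarith : (0:ℝ) < C)] at h1
    calc α ≤ c₂ * q α ^ p * C := h1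
      _ = q α ^ p * (C * c₂) := by ring
  have hqpup : q α ^ p ≤ B * α := by
    have h1 : c₁ * q α ^ p ≤ C * α := le_trans hKlow hKα2
    rw [hBdef]
    rw [show C / c₁ * α = (C * α) / c₁ by ring, le_div_iff₀ hc₁pos]
    linarith
  have hαApos : 0 < α / A := by positivity
  have hqppos : 0 < q α ^ p := Real.rpow_pos_of_pos hqα p
  have hinvp : 1/p ≤ 0 := by
    apply div_nonpos_of_nonneg_of_nonpos (by norm_num) hpneg.le
  -- invert
  have hqid : (q α ^ p) ^ (1/p) = q α := by
    rw [← Real.rpow_mul hqα.le, mul_one_div_cancel hpne, Real.rpow_one]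
  have hup : q α ≤ (α / A) ^ (1/p) := by
    rw [← hqid]
    exact Real.rpow_le_rpow_of_nonpos hαApos hqplow hinvp
  have hlow : (B * α) ^ (1/p) ≤ q α := by
    rw [← hqid]
    exact Real.rpow_le_rpow_of_nonpos hqppos hqpup hinvp
  have hαp : 0 < α ^ (1/p) := Real.rpow_pos_of_pos hαpos _
  -- exponent bounds:  -1/ε₀ ≤ 1/p ≤ 0  and  -1/p ≤ 1/ε₀
  have hexp1 : -(1/ε₀) ≤ 1/p := by
    have hnp : ε₀ ≤ -p := by linarith
    have h : 1/(-p) ≤ 1/ε₀ := one_div_le_one_div_of_le hε₀ hnp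
    have h2 : 1/p = -(1/(-p)) := by field_simp
    linarith
  have hexp2 : -(1/p) ≤ 1/ε₀ := by linarith
  have hApos : (0:ℝ) < A := by linarith
  have hBpos : (0:ℝ) < B := by linarith
  have hBbound : B ^ (-(1/ε₀)) ≤ B ^ (1/p) := Real.rpow_le_rpow_of_exponent_le hB1 hexp1
  have hAbound : A ^ (-(1/p)) ≤ A ^ (1/ε₀) := Real.rpow_le_rpow_of_exponent_le hA1 hexp2
  have hpe : α ^ (1 / (-2 + 2 * b α)) = α ^ (1/p) := by
    rw [hpdef]; ring_nf
  rw [hpe]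
  constructor
  · -- lower bound
    have hfin2 : B ^ (1/p) ≤ q α / α ^ (1/p) := by
      rw [le_div_iff₀ hαp]
      calc B ^ (1/p) * α ^ (1/p) = (B * α) ^ (1/p) :=
            (Real.mul_rpow hBpos.le hαpos.le).symm
        _ ≤ q α := hlow
    have h1 : 1/Z ≤ 1/(B ^ (1/ε₀)) :=
      one_div_le_one_div_of_le (by positivity) (le_max_right _ _)
    have h2 : 1/(B ^ (1/ε₀)) = B ^ (-(1/ε₀)) := by
      rw [Real.rpow_neg hBpos.le, one_div]
    linarith
  · -- upper bound
    have hfin1 : q α / α ^ (1/p) ≤ A ^ (-(1/p)) := by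
      rw [div_le_iff₀ hαp]
      calc q α ≤ (α / A) ^ (1/p) := hup
        _ = A ^ (-(1/p)) * α ^ (1/p) := by
            rw [Real.div_rpow hαpos.le hApos.le, Real.rpow_neg hApos.le,
              div_eq_mul_inv, mul_comm]
    have h2 : A ^ (1/ε₀) ≤ Z := le_max_left _ _
    linarith
end

section
/- Let $s\in(1/2,1)$ and let $b:(0,\infty)\to(1/2,1)$ be a continuous function with $\lim_{t\to\infty} b(t) = s$. Then for every real $x$ with $x < \frac{1}{2-2s} - 1$ one has $\lim_{\alpha\to\infty} \alpha^{x}\int_{\alpha}^{\infty} t^{1/(2b(t)-2)}\,dt = 0$ (in particular the integral $\int_{\alpha}^{\infty} t^{1/(2b(t)-2)}\,dt$ is finite for all sufficiently large $\alpha$). -/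
/-!
Since `b t → s`, the exponent `1 / (2 b t - 2)` tends to `-c` with `c = 1 / (2 - 2 s) > 1`.
Pick `p` with `-c < p < min (-1) (-1 - x)`; eventually `t ^ (1 / (2 b t - 2)) ≤ t ^ p`, so the
tail integral is at most `∫_α^∞ t ^ p dt = -α ^ (p + 1) / (p + 1)`, and `α ^ x` times this is a
constant multiple of `α ^ (x + p + 1) → 0`.
-/

open Filter MeasureTheory Set Real

lemma lintegral_Ioi_rpow_of_lt {p a : ℝ} (hp : p < -1) (ha : 0 < a) :
    ∫⁻ t in Ioi a, ENNReal.ofReal (t ^ p) = ENNReal.ofReal (-a ^ (p + 1) / (p + 1)) := by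
  rw [← integral_Ioi_rpow_of_lt hp ha, ofReal_integral_eq_lintegral_ofReal
    (integrableOn_Ioi_rpow_of_lt hp ha)]
  filter_upwards [ae_restrict_mem measurableSet_Ioi] with t ht
  exact rpow_nonneg (ha.trans ht).le p

lemma tendsto_rpow_mul_lintegral_Ioi_rpow {x p : ℝ} (hp : p < -1) (hxp : x + p + 1 < 0) :
    Tendsto (fun α : ℝ => ENNReal.ofReal (α ^ x) * ∫⁻ t in Ioi α, ENNReal.ofReal (t ^ p))
      atTop (nhds 0) := by
  have hpow : Tendsto (fun α : ℝ => α ^ (x + p + 1) * (-1 / (p + 1))) atTop (nhds 0) := by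
    simpa using (tendsto_rpow_neg_atTop (y := -(x + p + 1)) (by linarith)).mul_const
      (-1 / (p + 1))
  rw [← ENNReal.ofReal_zero]
  refine (ENNReal.tendsto_ofReal hpow).congr' ?_
  filter_upwards [eventually_gt_atTop 0] with α hα
  rw [lintegral_Ioi_rpow_of_lt hp hα, ← ENNReal.ofReal_mul (rpow_nonneg hα.le x),
    add_assoc, rpow_add hα]
  congr 1
  ring

lemma tendsto_rpow_mul_lintegral_Ioi_of_eventually_le_rpow {f : ℝ → ℝ} {x p : ℝ} (hp : p < -1)
    (hxp : x + p + 1 < 0) (hf : ∀ᶠ t in atTop, f t ≤ t ^ p) :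
    Tendsto (fun α : ℝ => ENNReal.ofReal (α ^ x) * ∫⁻ t in Ioi α, ENNReal.ofReal (f t))
      atTop (nhds 0) := by
  refine tendsto_nhds_bot_mono (tendsto_rpow_mul_lintegral_Ioi_rpow hp hxp) ?_
  obtain ⟨T, hT⟩ := eventually_atTop.mp hf
  filter_upwards [eventually_ge_atTop T] with α hα
  gcongr ENNReal.ofReal (α ^ x) * ?_
  refine setLIntegral_mono' measurableSet_Ioi fun t ht => ENNReal.ofReal_le_ofReal ?_
  exact hT t (hα.trans ht.le)

lemma eventually_rpow_le_rpow_of_tendsto {e : ℝ → ℝ} {L p : ℝ} (he : Tendsto e atTop (nhds L))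
    (hLp : L < p) : ∀ᶠ t in atTop, t ^ e t ≤ t ^ p := by
  filter_upwards [he.eventually_lt_const hLp, eventually_ge_atTop 1] with t het ht
  exact rpow_le_rpow_of_exponent_le ht het.le

lemma tendsto_one_div_two_mul_sub_two {b : ℝ → ℝ} {s : ℝ} (hs : s ≠ 1)
    (hbs : Tendsto b atTop (nhds s)) :
    Tendsto (fun t => 1 / (2 * b t - 2)) atTop (nhds (-(1 / (2 - 2 * s)))) := by
  have hden : 2 * s - 2 ≠ 0 := fun h => hs (by linarith)
  rw [show -(1 / (2 - 2 * s)) = 1 / (2 * s - 2) by rw [← neg_sub, div_neg, neg_neg]]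
  exact tendsto_const_nhds.div ((hbs.const_mul 2).sub_const 2) hden

theorem tail_integral_decay_below_critical_exponent_general (s : ℝ) (hs : s ∈ Ioo (1/2 : ℝ) 1)
    (b : ℝ → ℝ)
    (hbs : Tendsto b atTop (nhds s))
    (x : ℝ) (hx : x < 1 / (2 - 2 * s) - 1) :
    Tendsto (fun α : ℝ =>
        ENNReal.ofReal (α ^ x) * ∫⁻ t in Ioi α, ENNReal.ofReal (t ^ (1 / (2 * b t - 2))))
      atTop (nhds 0) := by
  obtain ⟨hs1, hs2⟩ := hs
  have hc : 1 < 1 / (2 - 2 * s) := by rw [lt_div_iff₀ (by linarith)]; linarith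
  obtain ⟨p, hcp, hp⟩ := exists_between
    (show -(1 / (2 - 2 * s)) < min (-1) (-1 - x) from lt_min (by linarith) (by linarith))
  obtain ⟨hp1, hpx⟩ := lt_min_iff.mp hp
  exact tendsto_rpow_mul_lintegral_Ioi_of_eventually_le_rpow hp1 (by linarith)
    (eventually_rpow_le_rpow_of_tendsto (tendsto_one_div_two_mul_sub_two hs2.ne hbs) hcp)

theorem tail_integral_decay_below_critical_exponent (s : ℝ) (hs : s ∈ Ioo (1/2 : ℝ) 1)
    (b : ℝ → ℝ)
    (hb : ∀ t : ℝ, 0 < t → b t ∈ Ioo (1/2 : ℝ) 1)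
    (hbc : ContinuousOn b (Ioi 0))
    (hbs : Tendsto b atTop (nhds s))
    (x : ℝ) (hx : x < 1 / (2 - 2 * s) - 1) :
    Tendsto (fun α : ℝ =>
        ENNReal.ofReal (α ^ x) * ∫⁻ t in Ioi α, ENNReal.ofReal (t ^ (1 / (2 * b t - 2))))
      atTop (nhds 0) :=
  tail_integral_decay_below_critical_exponent_general s hs b hbs x hx
end

section
/- Let $s\in(1/2,1)$ and let $b:(0,\infty)\to(1/2,1)$ be a continuous function with $\lim_{t\to\infty} b(t) = s$. Then for every real $x$ with $x > \frac{1}{2-2s} - 1$ one has $\lim_{\alpha\to\infty} \alpha^{x}\int_{\alpha}^{\infty} t^{1/(2b(t)-2)}\,dt = \infty$. -/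
open Filter MeasureTheory Set Real

theorem tail_integral_growth_above_critical_exponent (s : ℝ) (hs : s ∈ Ioo (1/2 : ℝ) 1)
    (b : ℝ → ℝ)
    (hb : ∀ t : ℝ, 0 < t → b t ∈ Ioo (1/2 : ℝ) 1)
    (hbc : ContinuousOn b (Ioi 0))
    (hbs : Tendsto b atTop (nhds s))
    (x : ℝ) (hx : 1 / (2 - 2 * s) - 1 < x) :
    Tendsto (fun α : ℝ =>
        ENNReal.ofReal (α ^ x) * ∫⁻ t in Ioi α, ENNReal.ofReal (t ^ (1 / (2 * b t - 2))))
      atTop (nhds ⊤) := by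
  obtain ⟨hs1, hs2⟩ := hs
  have h2s : 2 * s - 2 < 0 := by linarith
  have h2s' : -1 < 2 * s - 2 := by linarith
  have hinv : 1 / (2 * s - 2) < -1 := by
    rw [div_lt_iff_of_neg h2s]; linarith
  have h1 : 1 / (2 - 2 * s) = -(1 / (2 * s - 2)) := by
    rw [show (2:ℝ) - 2*s = -(2*s-2) by ring, div_neg]
  have hc : 0 < x + 1 + 1 / (2 * s - 2) := by linarith
  obtain ⟨p, hp1, hplt, hxp⟩ : ∃ p : ℝ, p < -1 ∧ p < 1 / (2 * s - 2) ∧ 0 < x + p + 1 :=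
    ⟨1 / (2 * s - 2) - (x + 1 + 1 / (2 * s - 2)) / 2, by linarith, by linarith, by linarith⟩
  -- exponent tends to 1/(2s-2)
  have hetend : Tendsto (fun t => 1 / (2 * b t - 2)) atTop (nhds (1 / (2 * s - 2))) := by
    apply Tendsto.div tendsto_const_nhds
    · exact ((hbs.const_mul 2).sub tendsto_const_nhds)
    · exact ne_of_lt h2s
  have hev : ∀ᶠ t in atTop, p < 1 / (2 * b t - 2) :=
    hetend.eventually (eventually_gt_nhds hplt)
  obtain ⟨T, hT⟩ := hev.exists_forall_of_atTop
  -- lower bound comparison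
  have key : ∀ᶠ α in atTop,
      ENNReal.ofReal (α ^ x * (-α ^ (p + 1) / (p + 1))) ≤
      ENNReal.ofReal (α ^ x) * ∫⁻ t in Ioi α, ENNReal.ofReal (t ^ (1 / (2 * b t - 2))) := by
    filter_upwards [eventually_ge_atTop (max T 1)] with α hα
    have hα1 : (1 : ℝ) ≤ α := le_trans (le_max_right _ _) hα
    have hαT : T ≤ α := le_trans (le_max_left _ _) hα
    have hα0 : (0 : ℝ) < α := lt_of_lt_of_le one_pos hα1
    have hint : IntegrableOn (fun t : ℝ => t ^ p) (Ioi α) :=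
      integrableOn_Ioi_rpow_of_lt hp1 hα0
    have hnn : 0 ≤ᵐ[volume.restrict (Ioi α)] fun t : ℝ => t ^ p := by
      filter_upwards [ae_restrict_mem measurableSet_Ioi] with t ht
      exact Real.rpow_nonneg (le_of_lt (hα0.trans ht)) p
    have heq : ENNReal.ofReal (∫ t in Ioi α, t ^ p) =
        ∫⁻ t in Ioi α, ENNReal.ofReal (t ^ p) :=
      ofReal_integral_eq_lintegral_ofReal hint hnn
    have hle : (∫⁻ t in Ioi α, ENNReal.ofReal (t ^ p)) ≤
        ∫⁻ t in Ioi α, ENNReal.ofReal (t ^ (1 / (2 * b t - 2))) := by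
      apply lintegral_mono_ae
      filter_upwards [ae_restrict_mem measurableSet_Ioi] with t ht
      apply ENNReal.ofReal_le_ofReal
      exact Real.rpow_le_rpow_of_exponent_le (le_trans hα1 (le_of_lt ht))
        (le_of_lt (hT t (le_trans hαT (le_of_lt ht))))
      -- hT : ∀ t ≥ T, p < 1 / (2 * b t - 2)
    calc ENNReal.ofReal (α ^ x * (-α ^ (p + 1) / (p + 1)))
        = ENNReal.ofReal (α ^ x) * ENNReal.ofReal (-α ^ (p + 1) / (p + 1)) := by
          rw [ENNReal.ofReal_mul (Real.rpow_nonneg (le_of_lt hα0) x)]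
      _ = ENNReal.ofReal (α ^ x) * ENNReal.ofReal (∫ t in Ioi α, t ^ p) := by
          rw [integral_Ioi_rpow_of_lt hp1 hα0]
      _ = ENNReal.ofReal (α ^ x) * ∫⁻ t in Ioi α, ENNReal.ofReal (t ^ p) := by rw [heq]
      _ ≤ _ := mul_le_mul_right hle _
  -- the lower bound tends to ⊤
  refine tendsto_nhds_top_mono ?_ key
  apply ENNReal.tendsto_ofReal_atTop.comp
  have hconst : 0 < -1 / (p + 1) := by
    apply div_pos_of_neg_of_neg <;> linarith
  have : Tendsto (fun α : ℝ => α ^ (x + p + 1) * (-1 / (p + 1))) atTop atTop :=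
    (tendsto_rpow_atTop hxp).atTop_mul_const hconst
  refine this.congr' ?_
  filter_upwards [eventually_gt_atTop 0] with α hα0
  rw [show x + p + 1 = x + (p + 1) by ring, Real.rpow_add hα0 x (p + 1)]
  ring
end

section
/- Let $s\in(1/2,1)$ and let $b:(0,\infty)\to(1/2,1)$ be a continuous function with $\lim_{\alpha\to\infty} b(\alpha) = s$. Suppose there exist constants $C\ge 1$ and $L>0$ such that for all $\alpha\in(L,\infty)$ the integral $\int_{\alpha}^{\infty} t^{1/(2b(t)-2)}\,dt$ is finite and positive and $\frac1C \le \frac{s-b(\alpha)}{\int_{\alpha}^{\infty} t^{1/(2b(t)-2)}\,dt} \le C$. Then for every real $x$ with $x > \frac{1}{2-2s} - 1$ one has $\lim_{\alpha\to\infty} (s-b(\alpha))\,\alpha^{x} = \infty$. -/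
open Filter MeasureTheory Set Real

theorem spectrum_gap_growth_above_critical_exponent (s : ℝ) (hs : s ∈ Ioo (1/2 : ℝ) 1)
    (b : ℝ → ℝ)
    (hb : ∀ t : ℝ, 0 < t → b t ∈ Ioo (1/2 : ℝ) 1)
    (hbc : ContinuousOn b (Ioi 0))
    (hbs : Tendsto b atTop (nhds s))
    (C : ℝ) (hC : 1 ≤ C) (L : ℝ) (hL : 0 < L)
    (hcomp : ∀ α ∈ Ioi L,
      (∫⁻ t in Ioi α, ENNReal.ofReal (t ^ (1 / (2 * b t - 2)))) ≠ ⊤ ∧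
      0 < (∫⁻ t in Ioi α, ENNReal.ofReal (t ^ (1 / (2 * b t - 2)))) ∧
      1 / C ≤ (s - b α) / (∫⁻ t in Ioi α, ENNReal.ofReal (t ^ (1 / (2 * b t - 2)))).toReal ∧
      (s - b α) / (∫⁻ t in Ioi α, ENNReal.ofReal (t ^ (1 / (2 * b t - 2)))).toReal ≤ C)
    (x : ℝ) (hx : 1 / (2 - 2 * s) - 1 < x) :
    Tendsto (fun α : ℝ => (s - b α) * α ^ x) atTop atTop := by
  obtain ⟨hs1, hs2⟩ := hs
  have h2s : 0 < 2 - 2 * s := by linarith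
  obtain ⟨p, hpdef⟩ : ∃ p : ℝ, p = 1 / (2 - 2 * s) := ⟨_, rfl⟩
  have hp0 : 0 < p := by rw [hpdef]; positivity
  have hx' : p - 1 < x := by rw [hpdef]; linarith
  obtain ⟨ε, hεdef⟩ : ∃ ε : ℝ, ε = (x + 1 - p) / 2 := ⟨_, rfl⟩
  have hε : 0 < ε := by rw [hεdef]; linarith
  obtain ⟨q, hqdef⟩ : ∃ q : ℝ, q = p + ε := ⟨_, rfl⟩
  have hq0 : 0 < q := by rw [hqdef]; linarith
  have hC0 : 0 < C := lt_of_lt_of_le one_pos hC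
  have hsq : s < 1 - 1 / (2 * q) := by
    have hpq : 1 = (2 - 2 * s) * p := by rw [hpdef]; field_simp
    have h1 : 1 / q < 2 - 2 * s := by
      rw [div_lt_iff₀ hq0]
      nlinarith
    have h2 : 1 / (2 * q) < (2 - 2 * s) / 2 := by
      rw [show 1 / (2 * q) = (1 / q) / 2 by ring]
      linarith
    linarith
  obtain ⟨M, hM⟩ := eventually_atTop.mp (hbs.eventually_lt_const hsq)
  set A : ℝ := max M (max (L + 1) 1) with hAdef
  -- key pointwise lower bound
  have key : ∀ α : ℝ, A ≤ α → 1 / C * 2 ^ (-q) * α ^ ε ≤ (s - b α) * α ^ x := by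
    intro α hα
    have hα1 : (1 : ℝ) ≤ α := le_trans (le_trans (le_max_right _ _) (le_max_right M _)) hα
    have hα0 : (0 : ℝ) < α := lt_of_lt_of_le one_pos hα1
    have hαL : L < α := by
      have : L + 1 ≤ α := le_trans (le_trans (le_max_left _ _) (le_max_right M _)) hα
      linarith
    have hαM : M ≤ α := le_trans (le_max_left _ _) hα
    obtain ⟨hfin, hpos, hlo, _⟩ := hcomp α hαL
    set F := (∫⁻ t in Ioi α, ENNReal.ofReal (t ^ (1 / (2 * b t - 2)))) with hFdef
    -- integrand lower bound on Ioc α (2α)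
    have hbound : ∀ t ∈ Ioc α (2 * α),
        ENNReal.ofReal ((2 * α) ^ (-q)) ≤ ENNReal.ofReal (t ^ (1 / (2 * b t - 2))) := by
      intro t ht
      obtain ⟨ht1, ht2⟩ := ht
      have ht0 : (0 : ℝ) < t := lt_trans hα0 ht1
      have htone : (1 : ℝ) ≤ t := le_trans hα1 ht1.le
      obtain ⟨hbt1, hbt2⟩ := hb t ht0
      have hbtM : b t < 1 - 1 / (2 * q) := hM t (le_trans hαM ht1.le)
      have hpos2 : 0 < 2 - 2 * b t := by linarith
      have hiq : 1 / q ≤ 2 - 2 * b t := by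
        have h3 : 1 / (2 * q) < 1 - b t := by linarith
        rw [div_le_iff₀ hq0]
        rw [div_lt_iff₀ (by positivity)] at h3
        nlinarith
      have hinv : 1 / (2 - 2 * b t) ≤ q := by
        rw [div_le_iff₀ hpos2]
        rw [div_le_iff₀ hq0] at hiq
        nlinarith
      have hexp : -q ≤ 1 / (2 * b t - 2) := by
        rw [show (2 * b t - 2 : ℝ) = -(2 - 2 * b t) by ring, one_div_neg_eq_neg_one_div]
        linarith
      have h1 : t ^ (-q) ≤ t ^ (1 / (2 * b t - 2)) :=
        Real.rpow_le_rpow_of_exponent_le htone hexp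
      have h2 : (2 * α) ^ (-q) ≤ t ^ (-q) :=
        Real.rpow_le_rpow_of_nonpos ht0 ht2 (by linarith)
      exact ENNReal.ofReal_le_ofReal (le_trans h2 h1)
    have hlint : ENNReal.ofReal ((2 * α) ^ (-q)) * ENNReal.ofReal α ≤ F := by
      calc ENNReal.ofReal ((2 * α) ^ (-q)) * ENNReal.ofReal α
          = ∫⁻ _ in Ioc α (2 * α), ENNReal.ofReal ((2 * α) ^ (-q)) := by
            rw [setLIntegral_const, Real.volume_Ioc]
            congr 1
            congr 1
            ring
        _ ≤ ∫⁻ t in Ioc α (2 * α), ENNReal.ofReal (t ^ (1 / (2 * b t - 2))) :=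
            setLIntegral_mono' measurableSet_Ioc hbound
        _ ≤ F := lintegral_mono_set Ioc_subset_Ioi_self
    have hT0 : 0 < F.toReal := ENNReal.toReal_pos hpos.ne' hfin
    have hTlow : (2 * α) ^ (-q) * α ≤ F.toReal := by
      have := ENNReal.toReal_mono hfin hlint
      rwa [ENNReal.toReal_mul, ENNReal.toReal_ofReal (by positivity),
        ENNReal.toReal_ofReal hα0.le] at this
    have hsb : 1 / C * F.toReal ≤ s - b α := by
      rw [div_le_div_iff₀ hC0 hT0] at hlo
      rw [div_mul_eq_mul_div, one_mul, div_le_iff₀ hC0]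
      linarith
    have hsb' : 1 / C * ((2 * α) ^ (-q) * α) ≤ s - b α := by
      have h := mul_le_mul_of_nonneg_left hTlow (by positivity : (0:ℝ) ≤ 1 / C)
      linarith
    have hmul : 1 / C * ((2 * α) ^ (-q) * α) * α ^ x ≤ (s - b α) * α ^ x :=
      mul_le_mul_of_nonneg_right hsb' (Real.rpow_nonneg hα0.le x)
    have hαpow : α ^ (-q) * α * α ^ x = α ^ ε := by
      rw [show α ^ (-q) * α * α ^ x = α ^ (-q) * α ^ (1:ℝ) * α ^ x by rw [Real.rpow_one],
        ← Real.rpow_add hα0, ← Real.rpow_add hα0]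
      congr 1
      rw [hqdef, hεdef]
      ring
    have heq : 1 / C * ((2 * α) ^ (-q) * α) * α ^ x = 1 / C * 2 ^ (-q) * α ^ ε := by
      rw [Real.mul_rpow (by norm_num) hα0.le, ← hαpow]
      ring
    linarith [heq ▸ hmul]
  have htend : Tendsto (fun α : ℝ => 1 / C * 2 ^ (-q) * α ^ ε) atTop atTop := by
    apply Tendsto.const_mul_atTop (by positivity : (0:ℝ) < 1 / C * 2 ^ (-q))
    exact tendsto_rpow_atTop hε
  apply tendsto_atTop_mono' _ _ htend
  filter_upwards [eventually_ge_atTop A] with α hα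
  exact key α hα
end
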